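/- For all integers n ≥ 2 and M with 1 ≤ M < 2^n, the polynomial p(x) = 1 − 4x + M·x^n has exactly one real root in the open interval (1/4, 1/2). -/

import Mathlib

/-- The four-letter DNA alphabet. -/
inductive DNA | A | T | G | C
deriving DecidableEq

/-- Hamming distance between two words (of equal length) given as lists. -/
def hammingD {α : Type*} [DecidableEq α] (x y : List α) : ℕ :=
  (x.zip y).countP (fun p => decide (p.1 ≠ p.2))

/-- A binary word has `D`-bounded running digital sum if in every prefix the
numbers of ones and zeros differ by at most `D`. -/
def brds (D : ℕ) (w : List Bool) : Prop :=
  ∀ k ≤ w.length,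
    (((w.take k).count true : ℤ) - ((w.take k).count false : ℤ)).natAbs ≤ D

/-- The letters `G`, `C` of the DNA alphabet. -/
def isGC : DNA → Bool
  | DNA.G => true
  | DNA.C => true
  | _ => false

/-- A DNA word is `D`-GC-prefix-balanced if in every prefix the number of
letters from {G,C} and the number of letters from {A,T} differ by at most `D`. -/
def gcpb (D : ℕ) (w : List DNA) : Prop :=
  ∀ k ≤ w.length,
    (((w.take k).countP isGC : ℤ) - ((w.take k).countP (fun c => !(isGC c)) : ℤ)).natAbs ≤ D

/-- A word is self-uncorrelated if no proper nonempty prefix equals the suffix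
of the same length. -/
def selfUncorr {α : Type*} (w : List α) : Prop :=
  ∀ k, 1 ≤ k → k ≤ w.length - 1 → w.take k ≠ w.drop (w.length - k)

/-- A set of words is mutually uncorrelated if every word is self-uncorrelated
and for every ordered pair of distinct words `x`, `y` no nonempty prefix of `y`
equals a suffix of `x` of the same length. -/
def mutUncorr {α : Type*} (S : Set (List α)) : Prop :=
  (∀ w ∈ S, selfUncorr w) ∧
  ∀ x ∈ S, ∀ y ∈ S, x ≠ y →
    ∀ k, 1 ≤ k → k ≤ x.length → y.take k ≠ x.drop (x.length - k)

/-- A Dyck word: equal numbers of ones and zeros, and every prefix has at least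
as many ones as zeros. -/
def isDyck (w : List Bool) : Prop :=
  w.count true = w.count false ∧
  ∀ k ≤ w.length, (w.take k).count false ≤ (w.take k).count true

/-- The height of a (Dyck) word is at most `D`: in every prefix the number of
ones exceeds the number of zeros by at most `D`. -/
def heightLe (D : ℕ) (w : List Bool) : Prop :=
  ∀ k ≤ w.length, ((w.take k).count true : ℤ) - ((w.take k).count false : ℤ) ≤ (D : ℤ)

open Set

/- The polynomial is convex on `[0, ∞)`, positive at `1/4` and negative at `1/2`: the intermediate
value theorem gives a root in between, and convexity together with the negative value at `1/2`
leaves room for only one root to the left of `1/2`. -/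

theorem ConvexOn.subsingleton_levelSet_of_lt {s : Set ℝ} {f : ℝ → ℝ} {b c : ℝ}
    (hf : ConvexOn ℝ s f) (hb : b ∈ s) (hfb : f b < c) :
    {x | x ∈ s ∧ x < b ∧ f x = c}.Subsingleton := by
  have no_lt : ∀ x ∈ {x | x ∈ s ∧ x < b ∧ f x = c}, ∀ y ∈ {x | x ∈ s ∧ x < b ∧ f x = c},
      ¬ x < y := by
    rintro x ⟨hxs, -, hfx⟩ y ⟨-, hyb, hfy⟩ hxy
    have := hf.lt_left_of_right_lt hxs hb (Ioo_subset_openSegment ⟨hxy, hyb⟩) (hfy ▸ hfb)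
    linarith
  exact fun x hx y hy => le_antisymm (not_lt.1 (no_lt y hy x hx))
    (not_lt.1 (no_lt x hx y hy))

theorem stmt15_general (n M : ℕ) (hM1 : 1 ≤ M) (hM2 : M < 2 ^ n) :
    ∃! x : ℝ, x ∈ Set.Ioo (1 / 4 : ℝ) (1 / 2) ∧
      1 - 4 * x + (M : ℝ) * x ^ n = 0 := by
  set f : ℝ → ℝ := fun x => 1 - 4 * x + (M : ℝ) * x ^ n
  have hconv : ConvexOn ℝ (Ici 0) f := by
    have hlin : ConvexOn ℝ (Ici (0 : ℝ)) (fun x => 1 - 4 * x) :=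
      (convexOn_const 1 (convex_Ici 0)).sub ((concaveOn_id (convex_Ici 0)).smul zero_le_four)
    exact hlin.add ((convexOn_pow n).smul (Nat.cast_nonneg M))
  have hf_quarter : 0 < f (1 / 4) := by
    have : (0 : ℝ) < M * (1 / 4) ^ n := mul_pos (by exact_mod_cast hM1) (by positivity)
    simp only [f]; linarith
  have hf_half : f (1 / 2) < 0 := by
    have : (M : ℝ) * (1 / 2) ^ n < 1 := by
      rw [div_pow, one_pow, mul_one_div, div_lt_one (by positivity)]
      exact_mod_cast hM2
    simp only [f]; linarith
  obtain ⟨x, hx, hfx⟩ := intermediate_value_Ioo' (by norm_num)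
    (by fun_prop : Continuous f).continuousOn ⟨hf_half, hf_quarter⟩
  have hroots := hconv.subsingleton_levelSet_of_lt (by norm_num : (1 / 2 : ℝ) ∈ Ici 0) hf_half
  have hIoo : Ioo (1 / 4 : ℝ) (1 / 2) ⊆ Ici 0 := fun z hz => mem_Ici.2 (by linarith [hz.1])
  exact ⟨x, ⟨hx, hfx⟩, fun y ⟨hy, hfy⟩ => hroots ⟨hIoo hy, hy.2, hfy⟩ ⟨hIoo hx, hx.2, hfx⟩⟩

/-- for `n ≥ 2` and `1 ≤ M < 2^n`, the polynomial
`1 - 4x + M xⁿ` has exactly one real root in the open interval `(1/4, 1/2)`. -/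
theorem stmt15 (n M : ℕ) (hn : 2 ≤ n) (hM1 : 1 ≤ M) (hM2 : M < 2 ^ n) :
    ∃! x : ℝ, x ∈ Set.Ioo (1 / 4 : ℝ) (1 / 2) ∧
      1 - 4 * x + (M : ℝ) * x ^ n = 0 :=
  stmt15_general n M hM1 hM2
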